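/- arXiv:2105.14087 — 3 statements merged into one kernel-verified Lean document; each statement's English description precedes it below -/
import Mathlib

section
/- Let φ : [0,∞) → [0,∞) be a bounded function and let A be a positive random variable such that for some p ∈ (0,1) and t₀ ≥ 0, φ(t) ≤ p·E[φ(A t)] for all t > t₀. If p·E[A^{-a}] < 1 for some a ∈ (0,∞), then there exists a constant C > 0 such that φ(t) ≤ C t^{-a} for all t > 0. -/
open MeasureTheory Filter

/-! If `φ ≤ ε + D t^{-a}` on `(0, ∞)`, the functional inequality upgrades this to
`φ ≤ p ε + D t^{-a}`: for `t > t₀` because `p E[D (A t)^{-a}] ≤ D t^{-a}`, and for `t ≤ t₀`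
because `D ≥ M t₀^a` makes `D t^{-a}` dominate the bound `M` of `φ`. Starting from `ε = M` and
iterating gives `φ ≤ p^n M + D t^{-a}`, and `p^n → 0`. -/

lemma le_mul_rpow_mul_rpow_neg {M a t T : ℝ} (hM : 0 ≤ M) (ha : 0 ≤ a) (ht : 0 < t)
    (htT : t ≤ T) : M ≤ M * T ^ a * t ^ (-a) := by
  have hta : 0 < t ^ a := Real.rpow_pos_of_pos ht a
  rw [Real.rpow_neg ht.le, mul_assoc, ← div_eq_mul_inv]
  exact le_mul_of_one_le_right hM <|
    (one_le_div hta).mpr (Real.rpow_le_rpow ht.le htT ha)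

section

variable {Ω : Type*} [MeasurableSpace Ω] {μ : Measure Ω} [IsProbabilityMeasure μ]
  {φ : ℝ → ℝ} {A : Ω → ℝ} {a : ℝ}

lemma integral_comp_mul_le_of_le_add_rpow (hφ0 : ∀ t, 0 ≤ φ t) (hApos : ∀ ω, 0 < A ω)
    (hint : Integrable (fun ω => A ω ^ (-a)) μ) {ε B t : ℝ} (ht : 0 < t)
    (hbound : ∀ s > 0, φ s ≤ ε + B * s ^ (-a)) :
    ∫ ω, φ (A ω * t) ∂μ ≤ ε + B * t ^ (-a) * ∫ ω, A ω ^ (-a) ∂μ := by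
  have hle : ∀ ω, φ (A ω * t) ≤ ε + B * t ^ (-a) * A ω ^ (-a) := fun ω => by
    have := hbound _ (mul_pos (hApos ω) ht)
    rwa [Real.mul_rpow (hApos ω).le ht.le, mul_left_comm, mul_comm (A ω ^ (-a))] at this
  calc ∫ ω, φ (A ω * t) ∂μ ≤ ∫ ω, (ε + B * t ^ (-a) * A ω ^ (-a)) ∂μ :=
        integral_mono_of_nonneg (ae_of_all _ fun ω => hφ0 _)
          ((integrable_const ε).add (hint.const_mul _)) (ae_of_all _ hle)
    _ = ε + B * t ^ (-a) * ∫ ω, A ω ^ (-a) ∂μ := by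
        rw [integral_add (integrable_const ε) (hint.const_mul _), integral_const,
          integral_const_mul, probReal_univ, one_smul]

lemma le_mul_add_rpow_of_le_add_rpow {M p t₀ D ε : ℝ} (hφ0 : ∀ t, 0 ≤ φ t)
    (hM : ∀ t, φ t ≤ M) (hApos : ∀ ω, 0 < A ω) (hp : 0 ≤ p)
    (hineq : ∀ t > t₀, φ t ≤ p * ∫ ω, φ (A ω * t) ∂μ) (ha : 0 ≤ a)
    (hint : Integrable (fun ω => A ω ^ (-a)) μ) (hcontr : p * ∫ ω, A ω ^ (-a) ∂μ ≤ 1)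
    (hD : M * t₀ ^ a ≤ D) (hD0 : 0 ≤ D) (hε : 0 ≤ ε)
    (hbound : ∀ s > 0, φ s ≤ ε + D * s ^ (-a)) :
    ∀ t > 0, φ t ≤ p * ε + D * t ^ (-a) := by
  intro t ht
  have hta : 0 ≤ t ^ (-a) := Real.rpow_nonneg ht.le _
  rcases le_or_gt t t₀ with hsmall | hlarge
  · calc φ t ≤ M * t₀ ^ a * t ^ (-a) :=
          (hM t).trans <| le_mul_rpow_mul_rpow_neg ((hφ0 t).trans (hM t)) ha ht hsmall
      _ ≤ p * ε + D * t ^ (-a) := by nlinarith [mul_nonneg hp hε]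
  · calc φ t ≤ p * (ε + D * t ^ (-a) * ∫ ω, A ω ^ (-a) ∂μ) :=
          (hineq t hlarge).trans <| mul_le_mul_of_nonneg_left
            (integral_comp_mul_le_of_le_add_rpow hφ0 hApos hint ht hbound) hp
      _ = p * ε + D * t ^ (-a) * (p * ∫ ω, A ω ^ (-a) ∂μ) := by ring
      _ ≤ p * ε + D * t ^ (-a) := by
          nlinarith [mul_le_mul_of_nonneg_left hcontr (mul_nonneg hD0 hta)]

end

theorem stmt_0_general {Ω : Type*} [MeasurableSpace Ω] (μ : Measure Ω) [IsProbabilityMeasure μ]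
    (φ : ℝ → ℝ) (A : Ω → ℝ) (p t₀ a : ℝ)
    (hφ0 : ∀ t, 0 ≤ φ t) (hφbdd : ∃ M, ∀ t, φ t ≤ M)
    (hApos : ∀ ω, 0 < A ω)
    (hp : 0 < p) (hp1 : p < 1) (ht₀ : 0 ≤ t₀)
    (hineq : ∀ t > t₀, φ t ≤ p * ∫ ω, φ (A ω * t) ∂μ)
    (ha : 0 < a)
    (hint : Integrable (fun ω => (A ω) ^ (-a)) μ)
    (hcontr : p * ∫ ω, (A ω) ^ (-a) ∂μ < 1) :
    ∃ C > 0, ∀ t > 0, φ t ≤ C * t ^ (-a) := by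
  obtain ⟨M, hM⟩ := hφbdd
  have hM0 : 0 ≤ M := (hφ0 0).trans (hM 0)
  set D := M * t₀ ^ a + 1
  have hD0 : 0 < D := by positivity
  have hiter : ∀ n : ℕ, ∀ t > 0, φ t ≤ p ^ n * M + D * t ^ (-a) := by
    intro n
    induction n with
    | zero =>
      intro t ht
      simpa using le_add_of_le_of_nonneg (hM t) (by positivity : 0 ≤ D * t ^ (-a))
    | succ n ih =>
      simpa only [pow_succ', mul_assoc] using
        le_mul_add_rpow_of_le_add_rpow hφ0 hM hApos hp.le hineq ha.le hint hcontr.le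
          (le_add_of_nonneg_right zero_le_one) hD0.le (by positivity) ih
  refine ⟨D, hD0, fun t ht => ge_of_tendsto' (x := atTop) ?_ fun n => hiter n t ht⟩
  simpa using ((tendsto_pow_atTop_nhds_zero_of_lt_one hp.le hp1).mul_const M).add_const
    (D * t ^ (-a))

/-- If a bounded nonnegative function `φ` satisfies `φ(t) ≤ p · E[φ(A t)]` for all `t > t₀`,
where `A` is a positive random variable, and `p · E[A^{-a}] < 1` for some `a > 0`, then
`φ(t) = O(t^{-a})`, i.e. there is `C > 0` with `φ(t) ≤ C t^{-a}` for all `t > 0`. -/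
theorem stmt_0 {Ω : Type*} [MeasurableSpace Ω] (μ : Measure Ω) [IsProbabilityMeasure μ]
    (φ : ℝ → ℝ) (A : Ω → ℝ) (p t₀ a : ℝ)
    (hφmeas : Measurable φ) (hφ0 : ∀ t, 0 ≤ φ t) (hφbdd : ∃ M, ∀ t, φ t ≤ M)
    (hA : Measurable A) (hApos : ∀ ω, 0 < A ω)
    (hp : 0 < p) (hp1 : p < 1) (ht₀ : 0 ≤ t₀)
    (hineq : ∀ t > t₀, φ t ≤ p * ∫ ω, φ (A ω * t) ∂μ)
    (ha : 0 < a)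
    (hint : Integrable (fun ω => (A ω) ^ (-a)) μ)
    (hcontr : p * ∫ ω, (A ω) ^ (-a) ∂μ < 1) :
    ∃ C > 0, ∀ t > 0, φ t ≤ C * t ^ (-a) :=
  stmt_0_general μ φ A p t₀ a hφ0 hφbdd hApos hp hp1 ht₀ hineq ha hint hcontr
end

section
/- Let f : ℕ → (0,∞) satisfy f(i) ≥ f_* > 0 and f(i) ≤ C₀ i^α for all i ≥ 1, where α ∈ (0,1/2] and C₀ > 0. Fix Λ > 0. Then there exists a constant C₁ > 0 (depending on f_*, Λ, C₀, α) such that for all θ ∈ (0, Λ], μ̂(θ) := Σ_{k=1}^{∞} ∏_{i=1}^{k} f(i)/(θ + f(i)) ≤ Σ_{k=1}^{∞} exp(-C₁ θ k^{1-α}). -/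
/-!
Each factor satisfies `f i / (θ + f i) = 1 - θ / (θ + f i) ≤ exp (-θ / (θ + f i))`, and for
`i ≤ k` the sublinear growth gives `θ + f i ≤ (Λ + C₀) k ^ α`. Hence the `k`-th product is at most
`exp (-k θ / ((Λ + C₀) k ^ α)) = exp (-C₁ θ k ^ (1 - α))` with `C₁ = 1 / (Λ + C₀)`, and the
comparison of the two series is termwise; the stretched-exponential series converges.
-/

open Real Finset Filter Asymptotics

lemma div_add_le_exp_neg_div (a θ : ℝ) : a / (θ + a) ≤ exp (-(θ / (θ + a))) := by
  rcases eq_or_ne (θ + a) 0 with h | h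
  · simp [h]
  · have hsplit : a / (θ + a) = -(θ / (θ + a)) + 1 := by field_simp; ring
    rw [hsplit]
    exact add_one_le_exp _

lemma prod_div_add_le_exp_neg {ι : Type*} (s : Finset ι) (f : ι → ℝ) {θ B : ℝ} (hθ : 0 < θ)
    (hf : ∀ i ∈ s, 0 ≤ f i) (hB : ∀ i ∈ s, θ + f i ≤ B) :
    ∏ i ∈ s, f i / (θ + f i) ≤ exp (-(#s * (θ / B))) := by
  have hfactor : ∀ i ∈ s, f i / (θ + f i) ≤ exp (-(θ / B)) := fun i hi => by
    have hpos : 0 < θ + f i := by linarith [hf i hi]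
    calc f i / (θ + f i) ≤ exp (-(θ / (θ + f i))) := div_add_le_exp_neg_div _ _
      _ ≤ exp (-(θ / B)) := by gcongr; exact hB i hi
  calc ∏ i ∈ s, f i / (θ + f i) ≤ ∏ _i ∈ s, exp (-(θ / B)) :=
        prod_le_prod (fun i hi => div_nonneg (hf i hi) (by linarith [hf i hi])) hfactor
    _ = exp (-(#s * (θ / B))) := by rw [prod_const, ← exp_nat_mul, mul_neg]

lemma summable_exp_neg_mul_rpow {c p : ℝ} (hc : 0 < c) (hp : 0 < p) :
    Summable fun k : ℕ => exp (-c * ((k : ℝ) + 1) ^ p) := by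
  have hshift : Tendsto (fun k : ℕ => (k : ℝ) + 1) atTop atTop :=
    tendsto_atTop_add_const_right _ 1 tendsto_natCast_atTop_atTop
  have hlittle : (fun k : ℕ => exp (-c * ((k : ℝ) + 1) ^ p)) =o[atTop]
      fun k : ℕ => (((k : ℝ) + 1) ^ p) ^ (-2 / p) :=
    (isLittleO_exp_neg_mul_rpow_atTop hc _).comp_tendsto ((tendsto_rpow_atTop hp).comp hshift)
  have hpow : ∀ k : ℕ, (((k : ℝ) + 1) ^ p) ^ (-2 / p) = ((k : ℝ) + 1) ^ (-2 : ℝ) := fun k => by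
    rw [← rpow_mul (by positivity), mul_div_cancel₀ _ hp.ne']
  have hsq : Summable fun k : ℕ => ((k : ℝ) + 1) ^ (-2 : ℝ) := by
    simpa using (summable_nat_add_iff 1).mpr (summable_nat_rpow.mpr (by norm_num : (-2 : ℝ) < -1))
  exact summable_of_isBigO_nat (hsq.congr fun k => (hpow k).symm) hlittle.isBigO

lemma prod_Icc_div_add_le_exp {f : ℕ → ℝ} {C Λ α θ : ℝ} (hf : ∀ i, 0 ≤ f i) (hα : 0 ≤ α)
    (hC : 0 ≤ C) (hub : ∀ i : ℕ, 1 ≤ i → f i ≤ C * (i : ℝ) ^ α) (hθ : 0 < θ) (hθΛ : θ ≤ Λ)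
    (k : ℕ) :
    ∏ i ∈ Icc 1 (k + 1), f i / (θ + f i) ≤ exp (-(1 / (Λ + C)) * θ * ((k : ℝ) + 1) ^ (1 - α)) := by
  have hk : (1 : ℝ) ≤ (k : ℝ) + 1 := by simp
  have hkα : 1 ≤ ((k : ℝ) + 1) ^ α := one_le_rpow hk hα
  have hB : ∀ i ∈ Icc 1 (k + 1), θ + f i ≤ (Λ + C) * ((k : ℝ) + 1) ^ α := fun i hi => by
    rw [mem_Icc] at hi
    have hi' : (i : ℝ) ^ α ≤ ((k : ℝ) + 1) ^ α := by gcongr; exact_mod_cast hi.2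
    calc θ + f i ≤ Λ * ((k : ℝ) + 1) ^ α + C * (i : ℝ) ^ α :=
          add_le_add (hθΛ.trans (le_mul_of_one_le_right (by linarith) hkα)) (hub i hi.1)
      _ ≤ (Λ + C) * ((k : ℝ) + 1) ^ α := by nlinarith
  refine (prod_div_add_le_exp_neg _ f hθ (fun i _ => hf i) hB).trans_eq ?_
  have hΛC : 0 < Λ + C := by linarith
  rw [Nat.card_Icc, rpow_sub (by linarith), rpow_one]
  push_cast
  field_simp

/-- If `f_* ≤ f(i) ≤ C₀ i^α` with `α ∈ (0,1/2]`, then there is `C₁ > 0` so that for all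
`θ ∈ (0, Λ]`, `μ̂(θ) = Σ_{k≥1} ∏_{i=1}^k f(i)/(θ+f(i)) ≤ Σ_{k≥1} exp(-C₁ θ k^{1-α})`. -/
theorem stmt_4 (f : ℕ → ℝ) (fstar C₀ α Λ : ℝ)
    (hfstar : 0 < fstar) (hf : ∀ i, fstar ≤ f i)
    (hα0 : 0 < α) (hα : α ≤ 1 / 2) (hC₀ : 0 < C₀)
    (hub : ∀ i : ℕ, 1 ≤ i → f i ≤ C₀ * (i : ℝ) ^ α)
    (hΛ : 0 < Λ) :
    ∃ C₁ > 0, ∀ θ : ℝ, 0 < θ → θ ≤ Λ →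
      (∑' k : ℕ, ∏ i ∈ Finset.Icc 1 (k + 1), f i / (θ + f i))
        ≤ ∑' k : ℕ, Real.exp (-C₁ * θ * ((k : ℝ) + 1) ^ (1 - α)) := by
  refine ⟨1 / (Λ + C₀), by positivity, fun θ hθ hθΛ => ?_⟩
  have hf0 : ∀ i, 0 ≤ f i := fun i => hfstar.le.trans (hf i)
  have hterm := prod_Icc_div_add_le_exp hf0 hα0.le hC₀.le hub hθ hθΛ
  have hsum : Summable fun k : ℕ => exp (-(1 / (Λ + C₀)) * θ * ((k : ℝ) + 1) ^ (1 - α)) := by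
    simpa only [neg_mul] using
      summable_exp_neg_mul_rpow (by positivity : 0 < 1 / (Λ + C₀) * θ) (by linarith : 0 < 1 - α)
  have hnonneg : ∀ k : ℕ, 0 ≤ ∏ i ∈ Icc 1 (k + 1), f i / (θ + f i) := fun k =>
    prod_nonneg fun i _ => div_nonneg (hf0 i) (by linarith [hf0 i])
  exact (hsum.of_nonneg_of_le hnonneg hterm).tsum_le_tsum hterm hsum
end

section
/- Fix an integer m ≥ 1 and β ≥ 0, and let i₀ ≥ 1 be an integer with (m+β)/((2m+β)i₀ + β) ≤ 1/2. Then there exists a constant C > 0 such that for every integer K > i₀, ∏_{i=i₀}^{K-1} (1 − (m+β)/((2m+β)i + β))^m ≥ C · K^{-m(m+β)/(2m+β)}. -/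
/-!
Write the `i`-th factor as `1 - a / (i + c)` with `a = (m+β)/(2m+β) < 1` and `c = β/(2m+β)`.
Bernoulli's inequality `(1 - t)^a ≤ 1 - a t` gives `1 - a / (y + 1) ≥ (y / (y + 1))^a`, so the
product over `i > i₀` dominates a telescoping product equal to `((i₀ + c)/(K - 1 + c))^a ≥ C K^{-a}`;
the factor at `i₀` is a positive constant because `a < 1 ≤ i₀`. Raising to the power `m` gives
the exponent `-m a`.
-/

open Finset Real

theorem rpow_div_add_one_le_one_sub_div {y a : ℝ} (hy : 0 ≤ y) (ha0 : 0 ≤ a) (ha1 : a ≤ 1) :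
    (y / (y + 1)) ^ a ≤ 1 - a / (y + 1) := by
  have hy1 : 0 < y + 1 := by linarith
  have hs : -1 ≤ -(y + 1)⁻¹ := neg_le_neg (inv_le_one_of_one_le₀ (by linarith))
  calc (y / (y + 1)) ^ a = (1 + -(y + 1)⁻¹) ^ a := by congr 1; field_simp; ring
    _ ≤ 1 + a * -(y + 1)⁻¹ := rpow_one_add_le_one_add_mul_self hs ha0 ha1
    _ = 1 - a / (y + 1) := by ring

theorem rpow_div_add_le_prod_range_one_sub_div {x a : ℝ} (hx : 0 < x) (ha0 : 0 ≤ a) (ha1 : a ≤ 1)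
    (k : ℕ) : (x / (x + k)) ^ a ≤ ∏ i ∈ range k, (1 - a / (x + i + 1)) := by
  induction k with
  | zero => simp [div_self hx.ne']
  | succ k ih =>
    have hxk : 0 < x + k := by positivity
    calc (x / (x + (k + 1 : ℕ))) ^ a = (x / (x + k)) ^ a * ((x + k) / (x + k + 1)) ^ a := by
          rw [← mul_rpow (by positivity) (by positivity)]
          congr 1
          push_cast
          field_simp
          ring
      _ ≤ (∏ i ∈ range k, (1 - a / (x + i + 1))) * (1 - a / (x + k + 1)) :=
          mul_le_mul ih (rpow_div_add_one_le_one_sub_div hxk.le ha0 ha1) (by positivity)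
            ((rpow_nonneg (by positivity) _).trans ih)
      _ = ∏ i ∈ range (k + 1), (1 - a / (x + i + 1)) := (prod_range_succ _ _).symm

theorem exists_pos_mul_rpow_neg_le_prod_Ico_one_sub_div {a c : ℝ} (ha0 : 0 ≤ a) (ha1 : a ≤ 1)
    (hc : 0 ≤ c) {n : ℕ} (han : a < n + c) :
    ∃ C > 0, ∀ K : ℕ, n < K → C * (K : ℝ) ^ (-a) ≤ ∏ i ∈ Ico n K, (1 - a / (i + c)) := by
  have hx : 0 < (n : ℝ) + c := by linarith
  have hfirst : 0 < 1 - a / (n + c) := sub_pos.2 ((div_lt_one hx).2 han)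
  refine ⟨(1 - a / (n + c)) * ((n + c) / (1 + c)) ^ a,
    mul_pos hfirst (rpow_pos_of_pos (by positivity) _), fun K hnK => ?_⟩
  have hK : (1 : ℝ) ≤ K := by exact_mod_cast hnK.pos
  have hlast : (K : ℝ) - 1 + c = n + c + ((K - (n + 1) : ℕ) : ℝ) := by
    rw [Nat.cast_sub hnK]; push_cast; ring
  have htail : ((n + c) / (K - 1 + c)) ^ a ≤ ∏ i ∈ Ico (n + 1) K, (1 - a / (i + c)) := by
    rw [prod_Ico_eq_prod_range, hlast]
    refine (rpow_div_add_le_prod_range_one_sub_div hx ha0 ha1 _).trans_eq (prod_congr rfl ?_)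
    intro i _
    push_cast
    ring_nf
  have hhead : ((n + c) / (1 + c)) ^ a * (K : ℝ) ^ (-a) ≤ ((n + c) / (K - 1 + c)) ^ a := by
    rw [rpow_neg (by positivity), ← div_eq_mul_inv, ← div_rpow (by positivity) (by positivity),
      div_div]
    refine rpow_le_rpow (by positivity) (div_le_div_of_nonneg_left hx.le (by linarith) ?_) ha0
    nlinarith
  calc (1 - a / (n + c)) * ((n + c) / (1 + c)) ^ a * (K : ℝ) ^ (-a)
      = (1 - a / (n + c)) * (((n + c) / (1 + c)) ^ a * (K : ℝ) ^ (-a)) := mul_assoc _ _ _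
    _ ≤ (1 - a / (n + c)) * ∏ i ∈ Ico (n + 1) K, (1 - a / (i + c)) :=
        mul_le_mul_of_nonneg_left (hhead.trans htail) hfirst.le
    _ = ∏ i ∈ Ico n K, (1 - a / (i + c)) := (prod_eq_prod_Ico_succ_bot hnK fun i : ℕ ↦ 1 - a / (i + c)).symm

theorem stmt_10_general (m : ℕ) (hm : 1 ≤ m) (β : ℝ) (hβ : 0 ≤ β)
    (i₀ : ℕ) (hi₀ : 1 ≤ i₀) :
    ∃ C > 0, ∀ K : ℕ, i₀ < K →
      C * (K : ℝ) ^ (-((m : ℝ) * ((m : ℝ) + β) / (2 * (m : ℝ) + β)))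
        ≤ ∏ i ∈ Finset.Ico i₀ K,
            (1 - ((m : ℝ) + β) / ((2 * (m : ℝ) + β) * (i : ℝ) + β)) ^ m := by
  have hm1 : (1 : ℝ) ≤ m := by exact_mod_cast hm
  have hd : 0 < 2 * (m : ℝ) + β := by positivity
  set a := ((m : ℝ) + β) / (2 * m + β)
  set c := β / (2 * (m : ℝ) + β)
  have ha1 : a < 1 := (div_lt_one hd).2 (by linarith)
  have hai₀ : a < i₀ + c := by
    have : (1 : ℝ) ≤ i₀ := by exact_mod_cast hi₀
    linarith [div_nonneg hβ hd.le]
  have hfactor (i : ℕ) : ((m : ℝ) + β) / ((2 * m + β) * i + β) = a / (i + c) := by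
    have hden : (2 * m + β) * (i : ℝ) + β = (2 * m + β) * (i + c) := by
      simp only [c]
      field_simp
    rw [hden, ← div_div]
  obtain ⟨C, hC, hbound⟩ := exists_pos_mul_rpow_neg_le_prod_Ico_one_sub_div (by positivity)
    ha1.le (by positivity) hai₀
  refine ⟨C ^ m, pow_pos hC m, fun K hK => ?_⟩
  calc C ^ m * (K : ℝ) ^ (-((m : ℝ) * ((m : ℝ) + β) / (2 * (m : ℝ) + β)))
      = (C * (K : ℝ) ^ (-a)) ^ m := by
        rw [mul_pow, ← rpow_mul_natCast K.cast_nonneg, neg_mul, mul_comm a, mul_div_assoc]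
    _ ≤ (∏ i ∈ Ico i₀ K, (1 - a / (i + c))) ^ m := pow_le_pow_left₀ (by positivity) (hbound K hK) m
    _ = _ := by simp only [hfactor, prod_pow]

/-- Product lower bound in the linear preferential attachment model: for `m ≥ 1`, `β ≥ 0`
and `i₀` with `(m+β)/((2m+β)i₀+β) ≤ 1/2`, there is `C > 0` such that for all `K > i₀`,
`∏_{i=i₀}^{K-1} (1 − (m+β)/((2m+β)i+β))^m ≥ C K^{-m(m+β)/(2m+β)}`. -/
theorem stmt_10 (m : ℕ) (hm : 1 ≤ m) (β : ℝ) (hβ : 0 ≤ β)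
    (i₀ : ℕ) (hi₀ : 1 ≤ i₀)
    (hhalf : ((m : ℝ) + β) / ((2 * m + β) * i₀ + β) ≤ 1 / 2) :
    ∃ C > 0, ∀ K : ℕ, i₀ < K →
      C * (K : ℝ) ^ (-((m : ℝ) * ((m : ℝ) + β) / (2 * (m : ℝ) + β)))
        ≤ ∏ i ∈ Finset.Ico i₀ K,
            (1 - ((m : ℝ) + β) / ((2 * (m : ℝ) + β) * (i : ℝ) + β)) ^ m :=
  stmt_10_general m hm β hβ i₀ hi₀
end
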